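/- arXiv:0910.2017 — 2 statements merged into one kernel-verified Lean document; each statement's English description precedes it below -/
import Mathlib

section
/- (Direction (i)⇒(ii) of the correspondence lemma) Let n ≥ k ≥ 1, v > n, c = (v-n)/(kv+n). Suppose x ∈ ℝ and z = (z₁,…,zₙ) ∈ ℤⁿ is such that exactly the first k entries z₁,…,z_k satisfy |zᵢ| ≥ 1 and zᵢ = 0 for i > k, and |x| ≤ Π₊(z)^{-v/n}. Define t by e^{(1-kc)t} = |z₁⋯z_k| and tᵢ by e^{-tᵢ}|zᵢ| = e^{-ct} for i ≤ k, tᵢ = 0 for i > k. Then t ≥ 0, t = Σᵢ tᵢ, and max(e^t|x|, max_i e^{-tᵢ}|zᵢ|) ≤ e^{-ct}. -/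
open scoped BigOperators

/-- Π₊(z) = ∏ᵢ max(1,|zᵢ|). -/
noncomputable def piPlus {n : ℕ} (z : Fin n → ℤ) : ℝ :=
  ∏ i, max 1 |(z i : ℝ)|

/-!
Taking logarithms, `log Π₊(z) = Σᵢ log|zᵢ|`, and the definitions make `(1 - kc) t = log Π₊(z)`,
so `Σ tᵢ = log Π₊(z) + kct = t`. The choice of `c` is exactly what makes
`(v/n)(1 - kc) = 1 + c`, hence `Π₊(z)^{-v/n} = e^{-(1+c)t}` and `e^t |x| ≤ e^{-ct}`;
the bounds for the `zᵢ` hold with equality for `i < k` and trivially for `zᵢ = 0`.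
-/

open Real

lemma one_le_piPlus {n : ℕ} (z : Fin n → ℤ) : 1 ≤ piPlus z :=
  Finset.one_le_prod fun _ _ => le_max_left _ _

/-- Relies on the convention `log 0 = 0`, which absorbs the case `m = 0`. -/
lemma log_max_one_abs_intCast (m : ℤ) : log (max 1 |(m : ℝ)|) = log |(m : ℝ)| := by
  rcases eq_or_ne m 0 with rfl | hm
  · simp
  · rw [max_eq_right (by exact_mod_cast Int.one_le_abs hm)]

lemma log_piPlus {n : ℕ} (z : Fin n → ℤ) : log (piPlus z) = ∑ i, log |(z i : ℝ)| := by
  rw [piPlus, log_prod fun i _ => (one_pos.trans_le (le_max_left 1 _)).ne']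
  exact Finset.sum_congr rfl fun i _ => log_max_one_abs_intCast (z i)

lemma Fin.sum_ite_val_lt_const {M : Type*} [AddCommMonoid M] {n k : ℕ} (hkn : k ≤ n) (a : M) :
    ∑ i : Fin n, (if (i : ℕ) < k then a else 0) = k • a := by
  rw [← Finset.sum_filter, Finset.sum_const, Fin.card_filter_val_lt, min_eq_right hkn]

noncomputable def correspondenceExponent (n k v : ℝ) : ℝ := (v - n) / (k * v + n)

section CorrespondenceExponent

variable {n k v : ℝ} (hn : 0 < n) (hk : 0 ≤ k) (hv : 0 < v)
include hn hk hv

lemma one_sub_mul_correspondenceExponent_pos : 0 < 1 - k * correspondenceExponent n k v := by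
  have hd : 0 < k * v + n := by positivity
  have : 1 - k * correspondenceExponent n k v = n * (1 + k) / (k * v + n) := by
    rw [correspondenceExponent]; field_simp; ring
  rw [this]; positivity

lemma div_mul_one_sub_mul_correspondenceExponent :
    v / n * (1 - k * correspondenceExponent n k v) = 1 + correspondenceExponent n k v := by
  have hd : 0 < k * v + n := by positivity
  rw [correspondenceExponent]; field_simp; ring

end CorrespondenceExponent

lemma exp_neg_log_abs_add_mul_abs {a : ℝ} (ha : a ≠ 0) (s : ℝ) :
    exp (-(log |a| + s)) * |a| = exp (-s) := by
  rw [neg_add, exp_add, exp_neg, exp_log (abs_pos.2 ha), mul_right_comm,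
    inv_mul_cancel₀ (abs_ne_zero.2 ha), one_mul]

/-- Direction (i)⇒(ii) of the correspondence lemma: from an integer vector `z`
whose first `k` entries are the nonzero ones and `|x| ≤ Π₊(z)^{-v/n}`, the
exponents `t`, `tᵢ` defined by `e^{(1-kc)t} = |z₁⋯z_k|` and `e^{-tᵢ}|zᵢ| = e^{-ct}`
(for `i ≤ k`, `tᵢ = 0` otherwise) satisfy `t ≥ 0`, `t = Σ tᵢ` and
`max(e^t|x|, e^{-tᵢ}|zᵢ|) ≤ e^{-ct}`. -/
theorem correspondence_forward (n k : ℕ) (hk : 1 ≤ k) (hkn : k ≤ n)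
    (v : ℝ) (hv : (n : ℝ) < v) (x : ℝ) (z : Fin n → ℤ)
    (hz : ∀ i : Fin n, ((i : ℕ) < k → 1 ≤ |z i|) ∧ (k ≤ (i : ℕ) → z i = 0))
    (hx : |x| ≤ piPlus z ^ (-(v / n))) :
    let c : ℝ := (v - n) / (k * v + n)
    let t : ℝ := Real.log (piPlus z) / (1 - k * c)
    let tv : Fin n → ℝ := fun i => if (i : ℕ) < k then Real.log |(z i : ℝ)| + c * t else 0
    0 ≤ t ∧ t = ∑ i, tv i ∧
      Real.exp t * |x| ≤ Real.exp (-(c * t)) ∧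
      ∀ i, Real.exp (-(tv i)) * |(z i : ℝ)| ≤ Real.exp (-(c * t)) := by
  intro c t tv
  have hn : (0 : ℝ) < n := by exact_mod_cast hk.trans hkn
  have hkc : 0 < 1 - k * c := one_sub_mul_correspondenceExponent_pos hn k.cast_nonneg (hn.trans hv)
  have hP : 1 ≤ piPlus z := one_le_piPlus z
  have ht : (1 - k * c) * t = log (piPlus z) := mul_div_cancel₀ _ hkc.ne'
  have htv : ∀ i, tv i = log |(z i : ℝ)| + if (i : ℕ) < k then c * t else 0 := by
    intro i
    by_cases hi : (i : ℕ) < k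
    · simp only [tv, if_pos hi]
    · simp [tv, hi, (hz i).2 (not_lt.1 hi)]
  refine ⟨div_nonneg (log_nonneg hP) hkc.le, ?_, ?_, fun i => ?_⟩
  · rw [Finset.sum_congr rfl fun i _ => htv i, Finset.sum_add_distrib, ← log_piPlus,
      Fin.sum_ite_val_lt_const hkn, nsmul_eq_mul, ← ht]
    ring
  · have hid : v / n * (1 - k * c) = 1 + c :=
      div_mul_one_sub_mul_correspondenceExponent hn k.cast_nonneg (hn.trans hv)
    have hxt : |x| ≤ exp (-((1 + c) * t)) := by
      rw [rpow_def_of_pos (one_pos.trans_le hP), ← ht] at hx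
      rw [← hid]; convert hx using 2; ring
    calc exp t * |x| ≤ exp t * exp (-((1 + c) * t)) := by gcongr
      _ = exp (-(c * t)) := by rw [← exp_add]; congr 1; ring
  · by_cases hi : (i : ℕ) < k
    · have hzi : (z i : ℝ) ≠ 0 := by exact_mod_cast abs_pos.1 (one_pos.trans_le ((hz i).1 hi))
      simp only [tv, if_pos hi, exp_neg_log_abs_add_mul_abs hzi, le_refl]
    · simp [tv, hi, (hz i).2 (not_lt.1 hi), (exp_pos _).le]
end

section
/- (Direction (ii)⇒(i) computation) Let n ≥ k ≥ 1, v > n, c = (v-n)/(kv+n). Let t₁,…,tₙ ≥ 0 with t = Σtᵢ, x ∈ ℝ, and z ∈ ℤⁿ with zᵢ = 0 for i > k and |zᵢ| ≥ 1 for i ≤ k. If e^t|x| ≤ e^{-ct} and e^{-tᵢ}|zᵢ| ≤ e^{-ct} for all 1 ≤ i ≤ n, then |x| ≤ Π₊(z)^{-v/n}. -/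
open scoped BigOperators

/-- Direction (ii)⇒(i) computation: if `e^t|x| ≤ e^{-ct}` and `e^{-tᵢ}|zᵢ| ≤ e^{-ct}`
for all `i`, where the nonzero entries of `z` are exactly the first `k` ones,
then `|x| ≤ Π₊(z)^{-v/n}`. -/
theorem correspondence_backward (n k : ℕ) (hk : 1 ≤ k) (hkn : k ≤ n)
    (v : ℝ) (hv : (n : ℝ) < v) (x : ℝ) (z : Fin n → ℤ)
    (tv : Fin n → ℝ) (htv : ∀ i, 0 ≤ tv i) (t : ℝ) (ht : t = ∑ i, tv i)
    (hz : ∀ i : Fin n, ((i : ℕ) < k → 1 ≤ |z i|) ∧ (k ≤ (i : ℕ) → z i = 0))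
    (hx : Real.exp t * |x| ≤ Real.exp (-(((v - n) / (k * v + n)) * t)))
    (hzb : ∀ i, Real.exp (-(tv i)) * |(z i : ℝ)| ≤
      Real.exp (-(((v - n) / (k * v + n)) * t))) :
    |x| ≤ piPlus z ^ (-(v / n)) := by
  have hn : 0 < (n : ℝ) := by
    have : (0:ℕ) < n := lt_of_lt_of_le hk hkn
    exact_mod_cast this
  have hden : (0:ℝ) < k * v + n := by
    have hk' : (1:ℝ) ≤ (k:ℝ) := by exact_mod_cast hk
    nlinarith
  set c : ℝ := (v - n) / (k * v + n) with hc
  have hc0 : 0 ≤ c := div_nonneg (by linarith) hden.le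
  have ht0 : 0 ≤ t := ht ▸ Finset.sum_nonneg fun i _ => htv i
  -- the filtered set of indices < k
  set s : Finset (Fin n) := Finset.univ.filter (fun i : Fin n => (i : ℕ) < k) with hs
  have hcard : s.card = k := by
    rw [hs]
    rw [Finset.card_filter]
    rw [Fin.sum_univ_eq_sum_range (fun i => if i < k then 1 else 0)]
    rw [Finset.sum_boole]
    have : Finset.filter (fun i => i < k) (Finset.range n) = Finset.range k := by
      ext i; simp; omega
    simp [this]
  -- piPlus bound
  have hfac : ∀ i ∈ s, max 1 |(z i : ℝ)| ≤ Real.exp (tv i - c * t) := by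
    intro i hi
    have hik : (i : ℕ) < k := by simpa [hs] using hi
    have h1 : (1:ℝ) ≤ |(z i : ℝ)| := by
      have := (hz i).1 hik
      rw [← Int.cast_abs]; exact_mod_cast this
    have := hzb i
    rw [max_eq_right h1]
    have h2 : |(z i : ℝ)| ≤ Real.exp (-(c*t)) / Real.exp (-(tv i)) := by
      rw [le_div_iff₀ (Real.exp_pos _)]
      linarith [hzb i]
    calc |(z i : ℝ)| ≤ Real.exp (-(c*t)) / Real.exp (-(tv i)) := h2
      _ = Real.exp (tv i - c * t) := by
          rw [← Real.exp_sub]; ring_nf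
  have hrest : ∀ i ∈ Finset.univ \ s, max 1 |(z i : ℝ)| = 1 := by
    intro i hi
    have : k ≤ (i : ℕ) := by
      simp [hs] at hi; omega
    simp [(hz i).2 this]
  have hpib : piPlus z ≤ Real.exp ((1 - k * c) * t) := by
    have hsplit : piPlus z = ∏ i ∈ s, max 1 |(z i : ℝ)| := by
      rw [piPlus, ← Finset.prod_sdiff (Finset.subset_univ s)]
      rw [Finset.prod_congr rfl hrest]
      simp
    rw [hsplit]
    calc ∏ i ∈ s, max 1 |(z i : ℝ)|
        ≤ ∏ i ∈ s, Real.exp (tv i - c * t) := by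
          refine Finset.prod_le_prod (fun i _ => le_trans zero_le_one (le_max_left _ _)) hfac
      _ = Real.exp (∑ i ∈ s, (tv i - c * t)) := by rw [Real.exp_sum]
      _ ≤ Real.exp ((1 - k * c) * t) := by
          apply Real.exp_le_exp.2
          rw [Finset.sum_sub_distrib, Finset.sum_const, hcard, nsmul_eq_mul]
          have hsum : ∑ i ∈ s, tv i ≤ t := by
            rw [ht]
            exact Finset.sum_le_sum_of_subset_of_nonneg (Finset.subset_univ s)
              (fun i _ _ => htv i)
          push_cast
          nlinarith
  -- |x| bound
  have hxb : |x| ≤ Real.exp (-((1 + c) * t)) := by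
    have h2 : |x| ≤ Real.exp (-(c*t)) / Real.exp t := by
      rw [le_div_iff₀ (Real.exp_pos _)]
      linarith [hx]
    calc |x| ≤ Real.exp (-(c*t)) / Real.exp t := h2
      _ = Real.exp (-((1 + c) * t)) := by rw [← Real.exp_sub]; ring_nf
  -- conclude
  have hexp : Real.exp ((1 - k * c) * t) ^ (-(v/n)) = Real.exp (-((1 + c) * t)) := by
    rw [← Real.exp_mul]
    congr 1
    rw [hc]
    field_simp
    ring
  calc |x| ≤ Real.exp (-((1 + c) * t)) := hxb
    _ = Real.exp ((1 - k * c) * t) ^ (-(v/n)) := hexp.symm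
    _ ≤ piPlus z ^ (-(v/n)) := by
        have hpi0 : 0 < piPlus z := by
          rw [piPlus]
          exact Finset.prod_pos fun i _ => lt_of_lt_of_le one_pos (le_max_left _ _)
        apply Real.rpow_le_rpow_of_nonpos hpi0 hpib
        have : 0 < v / n := div_pos (by linarith) hn
        linarith
end
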